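/- Sitewise transport gap for GPA: fix τ ∈ (0,1] and a threshold vector γ_1,…,γ_n with γ_i ∈ [0,1], let ℓ be the allocation produced by the GPA policy, and let ℓ* be any feasible offline allocation (nonnegative, with Σ_i Σ_t ℓ*_i^t ≤ s). If site i satisfies w_i > 0 and γ_i ≤ τ·p·c_i/w_i, then transport_i(ℓ) − transport_i(ℓ*) ≤ τ·penalty_i(ℓ*) + 2p·(b_i + c_i). -/

import Mathlib

open Finset

/-- `stock b d ℓ t` is the post-replenishment stock `k^{t+1}` at a single site
(with `stock b d ℓ 0 = k^1 = b`), under demands `d` and allocations `ℓ`. -/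
noncomputable def stock (b : ℕ) (d : ℕ → ℕ) (ℓ : ℕ → ℝ) : ℕ → ℝ
  | 0 => (b : ℝ)
  | t + 1 => max (stock b d ℓ t - (d (t + 1) : ℝ)) 0 + ℓ (t + 1)

/-- Sitewise transport cost `Σ_{t=1}^T w_i ⌈ℓ_i^t / c_i⌉`. -/
noncomputable def transportCost (T : ℕ) (wi : ℝ) (ci : ℕ) (ℓ : ℕ → ℝ) : ℝ :=
  ∑ t ∈ Icc 1 T, wi * (⌈ℓ t / (ci : ℝ)⌉ : ℝ)

/-- Sitewise lost-sales penalty `Σ_{t=1}^T p (d_i^t − k_i^t)_+`. -/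
noncomputable def penaltyCost (T : ℕ) (p : ℝ) (b : ℕ) (d : ℕ → ℕ) (ℓ : ℕ → ℝ) : ℝ :=
  ∑ t ∈ Icc 1 T, p * max ((d t : ℝ) - stock b d ℓ (t - 1)) 0

/-- Total cost of an allocation. -/
noncomputable def totalCost {n : ℕ} (T : ℕ) (w : Fin n → ℝ) (c b : Fin n → ℕ)
    (p : ℝ) (d : Fin n → ℕ → ℕ) (ℓ : Fin n → ℕ → ℝ) : ℝ :=
  ∑ i, (transportCost T (w i) (c i) (ℓ i) + penaltyCost T p (b i) (d i) (ℓ i))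

/-- One time step of GPA: eligible sites are processed in index order; site `i` is
eligible if `r i < b i` and `Lprev i ≤ γ i * Dt i`; an eligible site requests
`⌈(b i − r i)/c i⌉` full shipments and receives the min of that and the remaining
hub supply. Returns the remaining supply and the per-site allocation. -/
noncomputable def gpaInner {n : ℕ} (b c : Fin n → ℕ) (γ : Fin n → ℝ)
    (Dt Lprev r : Fin n → ℕ) (rem : ℕ) : ℕ × (Fin n → ℕ) :=
  (List.finRange n).foldl
    (fun (st : ℕ × (Fin n → ℕ)) (i : Fin n) =>
      if r i < b i ∧ (Lprev i : ℝ) ≤ γ i * (Dt i : ℝ) then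
        let q : ℕ := (b i - r i + c i - 1) / c i
        let give : ℕ := min st.1 (c i * q)
        (st.1 - give, Function.update st.2 i give)
      else st)
    (rem, fun _ => 0)

/-- GPA state after `t` time steps: (remaining hub supply, current stocks `k^{t+1}`,
cumulative allocations `L^t`). Initially `(s, b, 0)`. -/
noncomputable def gpaState {n : ℕ} (b c : Fin n → ℕ) (γ : Fin n → ℝ)
    (d : Fin n → ℕ → ℕ) (s : ℕ) : ℕ → ℕ × (Fin n → ℕ) × (Fin n → ℕ)
  | 0 => (s, b, fun _ => 0)
  | t + 1 =>
    let st := gpaState b c γ d s t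
    let r : Fin n → ℕ := fun i => st.2.1 i - d i (t + 1)
    let Dt : Fin n → ℕ := fun i => ∑ u ∈ Icc 1 (t + 1), d i u
    let res := gpaInner b c γ Dt st.2.2 r st.1
    (res.1, fun i => r i + res.2 i, fun i => st.2.2 i + res.2 i)

/-- Cumulative GPA allocation `L_i^t`. -/
noncomputable def gpaL {n : ℕ} (b c : Fin n → ℕ) (γ : Fin n → ℝ)
    (d : Fin n → ℕ → ℕ) (s : ℕ) (i : Fin n) (t : ℕ) : ℕ :=
  (gpaState b c γ d s t).2.2 i

/-- Per-step GPA allocation `ℓ_i^t` (as a real number). -/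
noncomputable def gpaAlloc {n : ℕ} (b c : Fin n → ℕ) (γ : Fin n → ℝ)
    (d : Fin n → ℕ → ℕ) (s : ℕ) (i : Fin n) (t : ℕ) : ℝ :=
  ((gpaL b c γ d s i t - gpaL b c γ d s i (t - 1) : ℕ) : ℝ)

/-
For the GPA allocation, every shipment is a whole number of full loads except possibly the one
that exhausts the hub, so `transport_i(ℓ) ≤ (w_i/c_i)·L_i + w_i`. A site is replenished only while
`L_i^{t-1} ≤ γ_i·D_i^t`, and one replenishment ships less than `b_i + c_i`, so
`L_i ≤ γ_i·D_i + b_i + c_i`. On the offline side, the stock identity gives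
`D_i ≤ b_i + L*_i + (lost sales of ℓ*)`, while `transport_i(ℓ*) ≥ (w_i/c_i)·L*_i`. Chaining these,
`γ_i·w_i/c_i ≤ τ·p` turns the lost sales into `τ·penalty_i(ℓ*)` and `w_i ≤ p·c_i` absorbs the rest.
-/

section SingleSite

lemma stock_eq_add_sum (b : ℕ) (d : ℕ → ℕ) (ℓ : ℕ → ℝ) (T : ℕ) :
    stock b d ℓ T = b + ∑ t ∈ Icc 1 T,
      (ℓ t + max ((d t : ℝ) - stock b d ℓ (t - 1)) 0 - d t) := by
  induction T with
  | zero => simp [stock]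
  | succ T ih =>
    have hsplit : max (stock b d ℓ T - d (T + 1)) 0
        = stock b d ℓ T - d (T + 1) + max ((d (T + 1) : ℝ) - stock b d ℓ T) 0 := by
      rcases le_total (stock b d ℓ T) (d (T + 1)) with h | h <;> simp [h]
    rw [sum_Icc_succ_top (Nat.le_add_left 1 T), ← add_assoc, ← ih, stock, Nat.add_sub_cancel,
      hsplit]
    ring

lemma stock_nonneg (b : ℕ) (d : ℕ → ℕ) (ℓ : ℕ → ℝ) (T : ℕ) (hℓ : ∀ t ∈ Icc 1 T, 0 ≤ ℓ t) :
    0 ≤ stock b d ℓ T := by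
  cases T with
  | zero => exact Nat.cast_nonneg b
  | succ T => exact add_nonneg (le_max_right _ _) (hℓ (T + 1) (by simp))

lemma sum_demand_le (b : ℕ) (d : ℕ → ℕ) (ℓ : ℕ → ℝ) (T : ℕ) (hℓ : ∀ t ∈ Icc 1 T, 0 ≤ ℓ t) :
    ∑ t ∈ Icc 1 T, (d t : ℝ) ≤
      b + ∑ t ∈ Icc 1 T, ℓ t + ∑ t ∈ Icc 1 T, max ((d t : ℝ) - stock b d ℓ (t - 1)) 0 := by
  have h := stock_nonneg b d ℓ T hℓ
  rw [stock_eq_add_sum, sum_sub_distrib, sum_add_distrib] at h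
  linarith

lemma div_mul_sum_le_transportCost (T : ℕ) {w : ℝ} (hw : 0 ≤ w) (c : ℕ) (ℓ : ℕ → ℝ) :
    w / c * ∑ t ∈ Icc 1 T, ℓ t ≤ transportCost T w c ℓ := by
  rw [transportCost, mul_sum]
  refine sum_le_sum fun t _ => ?_
  rw [div_mul_comm, mul_comm]
  exact mul_le_mul_of_nonneg_left (Int.le_ceil _) hw

end SingleSite

section Round

variable {n : ℕ} (b c : Fin n → ℕ) (γ : Fin n → ℝ) (Dt Lprev r : Fin n → ℕ)

noncomputable def gpaInnerStep (st : ℕ × (Fin n → ℕ)) (i : Fin n) : ℕ × (Fin n → ℕ) :=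
  if r i < b i ∧ (Lprev i : ℝ) ≤ γ i * (Dt i : ℝ) then
    let q : ℕ := (b i - r i + c i - 1) / c i
    let give : ℕ := min st.1 (c i * q)
    (st.1 - give, Function.update st.2 i give)
  else st

lemma gpaInner_eq_foldl (rem : ℕ) :
    gpaInner b c γ Dt Lprev r rem =
      (List.finRange n).foldl (gpaInnerStep b c γ Dt Lprev r) (rem, fun _ => 0) :=
  rfl

lemma gpaInnerStep_fst_le (st : ℕ × (Fin n → ℕ)) (j : Fin n) :
    (gpaInnerStep b c γ Dt Lprev r st j).1 ≤ st.1 := by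
  unfold gpaInnerStep
  split_ifs
  exacts [Nat.sub_le _ _, le_rfl]

lemma gpaInnerStep_snd_of_ne (st : ℕ × (Fin n → ℕ)) {i j : Fin n} (h : j ≠ i) :
    (gpaInnerStep b c γ Dt Lprev r st j).2 i = st.2 i := by
  unfold gpaInnerStep
  split_ifs
  exacts [Function.update_of_ne h.symm _ _, rfl]

lemma foldl_gpaInnerStep_fst_le (l : List (Fin n)) (st : ℕ × (Fin n → ℕ)) :
    (l.foldl (gpaInnerStep b c γ Dt Lprev r) st).1 ≤ st.1 := by
  induction l generalizing st with
  | nil => exact le_rfl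
  | cons j l ih => exact (ih _).trans (gpaInnerStep_fst_le b c γ Dt Lprev r st j)

lemma foldl_gpaInnerStep_snd_of_notMem (l : List (Fin n)) (st : ℕ × (Fin n → ℕ)) {i : Fin n}
    (hi : i ∉ l) : (l.foldl (gpaInnerStep b c γ Dt Lprev r) st).2 i = st.2 i := by
  induction l generalizing st with
  | nil => rfl
  | cons j l ih =>
    rw [List.mem_cons, not_or] at hi
    rw [List.foldl_cons, ih _ hi.2, gpaInnerStep_snd_of_ne b c γ Dt Lprev r st (Ne.symm hi.1)]

/-- Site `i` is served once, from the state `st` reached just before it is processed. -/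
lemma exists_gpaInner_eq_gpaInnerStep (rem : ℕ) (i : Fin n) :
    ∃ st : ℕ × (Fin n → ℕ), st.1 ≤ rem ∧ st.2 i = 0 ∧
      (gpaInner b c γ Dt Lprev r rem).2 i = (gpaInnerStep b c γ Dt Lprev r st i).2 i ∧
      (gpaInner b c γ Dt Lprev r rem).1 ≤ (gpaInnerStep b c γ Dt Lprev r st i).1 := by
  obtain ⟨l₁, l₂, hl⟩ := List.append_of_mem (List.mem_finRange i)
  have hnodup := List.nodup_finRange n
  rw [hl, List.nodup_middle, List.nodup_cons, List.mem_append, not_or] at hnodup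
  obtain ⟨⟨hi₁, hi₂⟩, -⟩ := hnodup
  rw [gpaInner_eq_foldl, hl, List.foldl_append, List.foldl_cons]
  exact ⟨_, foldl_gpaInnerStep_fst_le b c γ Dt Lprev r _ _,
    foldl_gpaInnerStep_snd_of_notMem b c γ Dt Lprev r _ _ hi₁,
    foldl_gpaInnerStep_snd_of_notMem b c γ Dt Lprev r _ _ hi₂,
    foldl_gpaInnerStep_fst_le b c γ Dt Lprev r _ _⟩

lemma gpaInner_fst_le (rem : ℕ) : (gpaInner b c γ Dt Lprev r rem).1 ≤ rem := by
  rw [gpaInner_eq_foldl]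
  exact foldl_gpaInnerStep_fst_le b c γ Dt Lprev r _ _

lemma gpaInner_snd_le_rem (rem : ℕ) (i : Fin n) : (gpaInner b c γ Dt Lprev r rem).2 i ≤ rem := by
  obtain ⟨st, hrem, hzero, hsnd, -⟩ := exists_gpaInner_eq_gpaInnerStep b c γ Dt Lprev r rem i
  rw [hsnd]
  unfold gpaInnerStep
  split_ifs
  · simp only [Function.update_self]
    exact (min_le_left _ _).trans hrem
  · simp [hzero]

lemma gpaInner_snd_le (rem : ℕ) (i : Fin n) :
    (gpaInner b c γ Dt Lprev r rem).2 i ≤ b i - r i + c i - 1 := by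
  obtain ⟨st, -, hzero, hsnd, -⟩ := exists_gpaInner_eq_gpaInnerStep b c γ Dt Lprev r rem i
  rw [hsnd]
  unfold gpaInnerStep
  split_ifs
  · simp only [Function.update_self]
    exact (min_le_right _ _).trans (Nat.mul_div_le _ _)
  · simp [hzero]

lemma gpaInner_eligible_of_pos (rem : ℕ) (i : Fin n)
    (hpos : 0 < (gpaInner b c γ Dt Lprev r rem).2 i) :
    r i < b i ∧ (Lprev i : ℝ) ≤ γ i * (Dt i : ℝ) := by
  obtain ⟨st, -, hzero, hsnd, -⟩ := exists_gpaInner_eq_gpaInnerStep b c γ Dt Lprev r rem i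
  by_contra hnot
  rw [hsnd, gpaInnerStep, if_neg hnot, hzero] at hpos
  exact hpos.false

lemma gpaInner_dvd_or_fst_eq_zero (rem : ℕ) (i : Fin n) :
    c i ∣ (gpaInner b c γ Dt Lprev r rem).2 i ∨ (gpaInner b c γ Dt Lprev r rem).1 = 0 := by
  obtain ⟨st, -, hzero, hsnd, hfst⟩ := exists_gpaInner_eq_gpaInnerStep b c γ Dt Lprev r rem i
  rw [hsnd]
  unfold gpaInnerStep at hfst ⊢
  split_ifs at hfst ⊢
  · rcases le_total st.1 (c i * ((b i - r i + c i - 1) / c i)) with h | h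
    · right
      simp only [min_eq_left h, Nat.sub_self] at hfst
      omega
    · left
      simp [min_eq_right h]
  · simp [hzero]

end Round

/-- The indicator of a nonempty hub pays in advance for the single partial load. -/
lemma mul_ceil_div_add_ite_le {w : ℝ} (hw : 0 ≤ w) {c a rem rem' : ℕ} (hc : 0 < c)
    (ha : a ≤ rem) (hrem : rem' ≤ rem) (hdvd : c ∣ a ∨ rem' = 0) :
    w * ⌈(a : ℝ) / c⌉ + (if rem' = 0 then 0 else w) ≤ w / c * a + (if rem = 0 then 0 else w) := by
  have hcR : (0 : ℝ) < c := by exact_mod_cast hc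
  by_cases hca : c ∣ a
  · obtain ⟨k, rfl⟩ := hca
    have hceil : (⌈((c * k : ℕ) : ℝ) / c⌉ : ℝ) = k := by
      push_cast
      rw [mul_div_cancel_left₀ _ hcR.ne', Int.ceil_natCast, Int.cast_natCast]
    have hload : w * k = w / c * ((c * k : ℕ) : ℝ) := by
      push_cast
      field_simp
    have hind : (if rem' = 0 then 0 else w) ≤ (if rem = 0 then 0 else w) := by
      split_ifs <;> first | exact le_rfl | exact hw | omega
    rw [hceil, hload]
    exact add_le_add_right hind _
  · have hrem' : rem' = 0 := hdvd.resolve_left hca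
    have hrem0 : rem ≠ 0 := by
      rintro rfl
      exact hca (Nat.le_zero.mp ha ▸ dvd_zero c)
    rw [if_pos hrem', if_neg hrem0, add_zero]
    calc w * ⌈(a : ℝ) / c⌉ ≤ w * ((a : ℝ) / c + 1) :=
          mul_le_mul_of_nonneg_left (Int.ceil_lt_add_one _).le hw
      _ = w / c * a + w := by ring

section Dynamics

variable {n : ℕ} (b c : Fin n → ℕ) (γ : Fin n → ℝ) (d : Fin n → ℕ → ℕ) (s : ℕ)

noncomputable def gpaRound (t : ℕ) : ℕ × (Fin n → ℕ) :=
  gpaInner b c γ (fun j => ∑ u ∈ Icc 1 (t + 1), d j u) (gpaState b c γ d s t).2.2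
    (fun j => (gpaState b c γ d s t).2.1 j - d j (t + 1)) (gpaState b c γ d s t).1

lemma gpaL_succ (i : Fin n) (t : ℕ) :
    gpaL b c γ d s i (t + 1) = gpaL b c γ d s i t + (gpaRound b c γ d s t).2 i :=
  rfl

lemma gpaAlloc_succ (i : Fin n) (t : ℕ) :
    gpaAlloc b c γ d s i (t + 1) = (gpaRound b c γ d s t).2 i := by
  rw [gpaAlloc, Nat.add_sub_cancel, gpaL_succ, Nat.add_sub_cancel_left]

lemma gpaL_le {i : Fin n} (hγ : 0 ≤ γ i) (t : ℕ) :
    (gpaL b c γ d s i t : ℝ) ≤ γ i * ∑ u ∈ Icc 1 t, (d i u : ℝ) + (b i + c i) := by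
  induction t with
  | zero => simp [gpaL, gpaState]; positivity
  | succ t ih =>
    have hD : γ i * ∑ u ∈ Icc 1 t, (d i u : ℝ) ≤ γ i * ∑ u ∈ Icc 1 (t + 1), (d i u : ℝ) :=
      mul_le_mul_of_nonneg_left (sum_le_sum_of_subset_of_nonneg
        (Icc_subset_Icc_right t.le_succ) fun _ _ _ => Nat.cast_nonneg _) hγ
    rw [gpaL_succ, Nat.cast_add]
    rcases Nat.eq_zero_or_pos ((gpaRound b c γ d s t).2 i) with hzero | hpos
    · rw [hzero, Nat.cast_zero, add_zero]
      linarith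
    · have hprev : (gpaL b c γ d s i t : ℝ) ≤ γ i * ∑ u ∈ Icc 1 (t + 1), (d i u : ℝ) := by
        exact_mod_cast (gpaInner_eligible_of_pos _ _ _ _ _ _ _ _ hpos).2
      have hship : ((gpaRound b c γ d s t).2 i : ℝ) ≤ b i + c i := by
        exact_mod_cast (gpaInner_snd_le _ _ _ _ _ _ _ i).trans (by omega)
      linarith

lemma sum_mul_ceil_gpaAlloc_add_ite_le {w : ℝ} (hw : 0 ≤ w) {i : Fin n} (hc : 0 < c i)
    (t : ℕ) :
    ∑ u ∈ Icc 1 t, w * ⌈gpaAlloc b c γ d s i u / c i⌉ +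
        (if (gpaState b c γ d s t).1 = 0 then 0 else w) ≤
      w / c i * gpaL b c γ d s i t + w := by
  induction t with
  | zero => split_ifs <;> simp [gpaL, gpaState, hw]
  | succ t ih =>
    have hship : (gpaRound b c γ d s t).2 i ≤ (gpaState b c γ d s t).1 :=
      gpaInner_snd_le_rem _ _ _ _ _ _ _ i
    have hhub : (gpaState b c γ d s (t + 1)).1 ≤ (gpaState b c γ d s t).1 :=
      gpaInner_fst_le _ _ _ _ _ _ _
    have hdvd : c i ∣ (gpaRound b c γ d s t).2 i ∨ (gpaState b c γ d s (t + 1)).1 = 0 :=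
      gpaInner_dvd_or_fst_eq_zero _ _ _ _ _ _ _ i
    have hround := mul_ceil_div_add_ite_le hw hc hship hhub hdvd
    rw [sum_Icc_succ_top (Nat.le_add_left 1 t), gpaAlloc_succ, gpaL_succ, Nat.cast_add]
    linarith

lemma transportCost_gpaAlloc_le (T : ℕ) {w : ℝ} (hw : 0 ≤ w) {i : Fin n} (hc : 0 < c i) :
    transportCost T w (c i) (gpaAlloc b c γ d s i) ≤ w / c i * gpaL b c γ d s i T + w := by
  have h := sum_mul_ceil_gpaAlloc_add_ite_le b c γ d s hw hc T
  have hind : 0 ≤ (if (gpaState b c γ d s T).1 = 0 then 0 else w) := by split_ifs <;> simp [hw]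
  exact le_of_add_le_of_nonneg_left h hind

lemma transportCost_gpaAlloc_le_sum_demand (T : ℕ) {w : ℝ} (hw : 0 ≤ w) {i : Fin n}
    (hc : 0 < c i) (hγ : 0 ≤ γ i) :
    transportCost T w (c i) (gpaAlloc b c γ d s i) ≤
      w / c i * (γ i * ∑ t ∈ Icc 1 T, (d i t : ℝ) + (b i + c i)) + w := by
  refine (transportCost_gpaAlloc_le b c γ d s T hw hc).trans ?_
  gcongr
  exact gpaL_le b c γ d s hγ T

end Dynamics

theorem gpa_sitewise_transport_gap_general
    (n T : ℕ) (c b : Fin n → ℕ) (hc : ∀ i, 1 ≤ c i)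
    (w : Fin n → ℝ)
    (p : ℝ) (hwp : ∀ i, w i ≤ p * c i)
    (s : ℕ) (d : Fin n → ℕ → ℕ)
    (τ : ℝ)
    (γ : Fin n → ℝ) (hγ : ∀ i, 0 ≤ γ i ∧ γ i ≤ 1)
    (ℓ : Fin n → ℕ → ℝ) (hℓ : ℓ = fun i t => gpaAlloc b c γ d s i t)
    (ℓs : Fin n → ℕ → ℝ) (hℓs : ∀ i, ∀ t ∈ Icc 1 T, 0 ≤ ℓs i t)
    :
    ∀ i, 0 < w i → γ i ≤ τ * p * c i / w i →
      transportCost T (w i) (c i) (ℓ i) - transportCost T (w i) (c i) (ℓs i)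
        ≤ τ * penaltyCost T p (b i) (d i) (ℓs i) + 2 * p * (b i + c i) := by
  intro i hwi hγτ
  subst hℓ
  obtain ⟨hγ₀, hγ₁⟩ := hγ i
  have hcR : (0 : ℝ) < c i := by exact_mod_cast hc i
  set g := w i / c i
  have hg : 0 ≤ g := by positivity
  have hgp : g ≤ p := (div_le_iff₀ hcR).mpr (hwp i)
  have hgγ : g * γ i ≤ τ * p := by
    rw [div_mul_eq_mul_div, div_le_iff₀ hcR, mul_comm]
    exact (le_div_iff₀ hwi).mp hγτ
  set Ls := ∑ t ∈ Icc 1 T, ℓs i t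
  set Lost := ∑ t ∈ Icc 1 T, max ((d i t : ℝ) - stock (b i) (d i) (ℓs i) (t - 1)) 0
  have hb : (0 : ℝ) ≤ b i := Nat.cast_nonneg _
  have hLs : 0 ≤ g * Ls := mul_nonneg hg (sum_nonneg (hℓs i))
  have hLost : 0 ≤ Lost := sum_nonneg fun _ _ => le_max_right _ _
  calc _ ≤ g * (γ i * ∑ t ∈ Icc 1 T, (d i t : ℝ) + (b i + c i)) + w i - g * Ls :=
        sub_le_sub (transportCost_gpaAlloc_le_sum_demand b c γ d s T hwi.le (hc i) hγ₀)
          (div_mul_sum_le_transportCost T hwi.le (c i) (ℓs i))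
    _ ≤ g * (γ i * (b i + Ls + Lost) + (b i + c i)) + w i - g * Ls := by
        gcongr
        exact sum_demand_le (b i) (d i) (ℓs i) T (hℓs i)
    _ = g * γ i * Lost + (γ i - 1) * (g * Ls) + g * γ i * b i + g * b i + 2 * w i := by
        rw [← div_mul_cancel₀ (w i) hcR.ne']
        ring
    _ ≤ τ * p * Lost + 0 + p * b i + p * b i + 2 * (p * c i) := by
        gcongr
        · exact mul_nonpos_of_nonpos_of_nonneg (by linarith) hLs
        · exact (mul_le_of_le_one_right hg hγ₁).trans hgp
        · exact hwp i
    _ = τ * penaltyCost T p (b i) (d i) (ℓs i) + 2 * p * (b i + c i) := by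
        rw [penaltyCost, ← mul_sum]
        ring

/-- **Sitewise transport gap for GPA.** For `τ ∈ (0,1]` and any feasible offline
allocation `ℓ*`, if site `i` has `w i > 0` and `γ i ≤ τ·p·c_i/w_i`, then
`transport_i(ℓ) − transport_i(ℓ*) ≤ τ·penalty_i(ℓ*) + 2p·(b_i + c_i)`. -/
theorem gpa_sitewise_transport_gap
    (n T : ℕ) (c b : Fin n → ℕ) (hc : ∀ i, 1 ≤ c i)
    (w : Fin n → ℝ) (hw : ∀ i, 0 ≤ w i)
    (p : ℝ) (hp : 0 ≤ p) (hwp : ∀ i, w i ≤ p * c i)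
    (s : ℕ) (d : Fin n → ℕ → ℕ) (hd : ∀ i, ∀ t ∈ Icc 1 T, d i t ≤ b i)
    (τ : ℝ) (hτ0 : 0 < τ) (hτ1 : τ ≤ 1)
    (γ : Fin n → ℝ) (hγ : ∀ i, 0 ≤ γ i ∧ γ i ≤ 1)
    (ℓ : Fin n → ℕ → ℝ) (hℓ : ℓ = fun i t => gpaAlloc b c γ d s i t)
    (ℓs : Fin n → ℕ → ℝ) (hℓs : ∀ i, ∀ t ∈ Icc 1 T, 0 ≤ ℓs i t)
    (hfeas : ∑ i, ∑ t ∈ Icc 1 T, ℓs i t ≤ (s : ℝ))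
    :
    ∀ i, 0 < w i → γ i ≤ τ * p * c i / w i →
      transportCost T (w i) (c i) (ℓ i) - transportCost T (w i) (c i) (ℓs i)
        ≤ τ * penaltyCost T p (b i) (d i) (ℓs i) + 2 * p * (b i + c i) :=
  gpa_sitewise_transport_gap_general n T c b hc w p hwp s d τ γ hγ ℓ hℓ ℓs hℓs
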